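/- Let E be a real normed vector space, n ≥ 1, and M ≥ 0. For j = 1, 2, let T₁ʲ, …, Tₙʲ : E → E and S₁ʲ, …, Sₙʲ : E → E be continuous linear maps, all with operator norm at most M, and let g₁, …, gₙ : E → E and h₁, …, hₙ : E → E be maps that are each 1-Lipschitz and norm-nonincreasing. Let Fʲ be the layered network with layers (Tᵢʲ, gᵢ), i = 1, …, n, and let Hʲ be the layered network with layers (Sᵢʲ, hᵢ), i = 1, …, n. Then for every x ∈ E, ‖H¹(F¹(x)) − H²(F²(x))‖ ≤ M^{2n−1} · ‖x‖ · (Σ_{i=1}^{n} ‖Tᵢ¹ − Tᵢ²‖ + Σ_{i=1}^{n} ‖Sᵢ¹ − Sᵢ²‖), where all norms of linear maps are operator norms. -/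
import Mathlib


/-- The layered network with linear layers `T i` and activations `g i`, `i = 1, …, n`,
applied to an input `x`: `y 0 = x` and `y i = g i (T i (y (i-1)))`. -/
def layeredNet {E : Type*} [NormedAddCommGroup E] [NormedSpace ℝ E]
    (T : ℕ → E →L[ℝ] E) (g : ℕ → E → E) (x : E) : ℕ → E
  | 0 => x
  | i + 1 => g (i + 1) (T (i + 1) (layeredNet T g x i))

lemma layeredNet_norm_le {E : Type*} [NormedAddCommGroup E] [NormedSpace ℝ E]
    (n : ℕ) (M : ℝ) (hM : 0 ≤ M) (T : ℕ → E →L[ℝ] E) (g : ℕ → E → E)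
    (hT : ∀ i ∈ Finset.Icc 1 n, ‖T i‖ ≤ M)
    (hgNorm : ∀ i ∈ Finset.Icc 1 n, ∀ u : E, ‖g i u‖ ≤ ‖u‖)
    (x : E) : ∀ i ≤ n, ‖layeredNet T g x i‖ ≤ M ^ i * ‖x‖ := by
  intro i hi
  induction i with
  | zero => simp [layeredNet]
  | succ k ih =>
    have hk : k ≤ n := Nat.le_of_succ_le hi
    have hmem : k + 1 ∈ Finset.Icc 1 n := Finset.mem_Icc.mpr ⟨Nat.succ_le_succ (Nat.zero_le _), hi⟩
    calc ‖layeredNet T g x (k+1)‖ = ‖g (k+1) (T (k+1) (layeredNet T g x k))‖ := rfl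
      _ ≤ ‖T (k+1) (layeredNet T g x k)‖ := hgNorm _ hmem _
      _ ≤ ‖T (k+1)‖ * ‖layeredNet T g x k‖ := (T (k+1)).le_opNorm _
      _ ≤ M * (M ^ k * ‖x‖) := by
          apply mul_le_mul (hT _ hmem) (ih hk) (norm_nonneg _) hM
      _ = M ^ (k+1) * ‖x‖ := by ring

lemma layeredNet_lip {E : Type*} [NormedAddCommGroup E] [NormedSpace ℝ E]
    (n : ℕ) (M : ℝ) (hM : 0 ≤ M) (T : ℕ → E →L[ℝ] E) (g : ℕ → E → E)
    (hT : ∀ i ∈ Finset.Icc 1 n, ‖T i‖ ≤ M)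
    (hgLip : ∀ i ∈ Finset.Icc 1 n, ∀ u v : E, ‖g i u - g i v‖ ≤ ‖u - v‖)
    (x y : E) : ∀ i ≤ n, ‖layeredNet T g x i - layeredNet T g y i‖ ≤ M ^ i * ‖x - y‖ := by
  intro i hi
  induction i with
  | zero => simp [layeredNet]
  | succ k ih =>
    have hk : k ≤ n := Nat.le_of_succ_le hi
    have hmem : k + 1 ∈ Finset.Icc 1 n := Finset.mem_Icc.mpr ⟨Nat.succ_le_succ (Nat.zero_le _), hi⟩
    calc ‖layeredNet T g x (k+1) - layeredNet T g y (k+1)‖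
        ≤ ‖T (k+1) (layeredNet T g x k) - T (k+1) (layeredNet T g y k)‖ := hgLip _ hmem _ _
      _ = ‖T (k+1) (layeredNet T g x k - layeredNet T g y k)‖ := by rw [map_sub]
      _ ≤ ‖T (k+1)‖ * ‖layeredNet T g x k - layeredNet T g y k‖ := (T (k+1)).le_opNorm _
      _ ≤ M * (M ^ k * ‖x - y‖) := by
          apply mul_le_mul (hT _ hmem) (ih hk) (norm_nonneg _) hM
      _ = M ^ (k+1) * ‖x - y‖ := by ring

lemma layeredNet_perturb {E : Type*} [NormedAddCommGroup E] [NormedSpace ℝ E]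
    (n : ℕ) (M : ℝ) (hM : 0 ≤ M) (T₁ T₂ : ℕ → E →L[ℝ] E) (g : ℕ → E → E)
    (hT₁ : ∀ i ∈ Finset.Icc 1 n, ‖T₁ i‖ ≤ M)
    (hT₂ : ∀ i ∈ Finset.Icc 1 n, ‖T₂ i‖ ≤ M)
    (hgLip : ∀ i ∈ Finset.Icc 1 n, ∀ u v : E, ‖g i u - g i v‖ ≤ ‖u - v‖)
    (hgNorm : ∀ i ∈ Finset.Icc 1 n, ∀ u : E, ‖g i u‖ ≤ ‖u‖)
    (x : E) : ∀ i ≤ n, ‖layeredNet T₁ g x i - layeredNet T₂ g x i‖ ≤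
      M ^ (i - 1) * ‖x‖ * ∑ j ∈ Finset.Icc 1 i, ‖T₁ j - T₂ j‖ := by
  intro i hi
  induction i with
  | zero => simp [layeredNet]
  | succ k ih =>
    have hk : k ≤ n := Nat.le_of_succ_le hi
    have hmem : k + 1 ∈ Finset.Icc 1 n := Finset.mem_Icc.mpr ⟨Nat.succ_le_succ (Nat.zero_le _), hi⟩
    set a₁ := layeredNet T₁ g x k
    set a₂ := layeredNet T₂ g x k
    have hstep : ∀ j, 0 ≤ ‖T₁ j - T₂ j‖ := fun j => norm_nonneg _
    have h1 : ‖layeredNet T₁ g x (k+1) - layeredNet T₂ g x (k+1)‖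
        ≤ ‖T₁ (k+1) a₁ - T₂ (k+1) a₂‖ := hgLip _ hmem _ _
    have h2 : ‖T₁ (k+1) a₁ - T₂ (k+1) a₂‖
        ≤ ‖T₁ (k+1) (a₁ - a₂)‖ + ‖(T₁ (k+1) - T₂ (k+1)) a₂‖ := by
      have : T₁ (k+1) a₁ - T₂ (k+1) a₂ = T₁ (k+1) (a₁ - a₂) + (T₁ (k+1) - T₂ (k+1)) a₂ := by
        simp [map_sub]
      rw [this]; exact norm_add_le _ _
    have h3 : ‖T₁ (k+1) (a₁ - a₂)‖ ≤ M ^ k * ‖x‖ * ∑ j ∈ Finset.Icc 1 k, ‖T₁ j - T₂ j‖ := by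
      calc ‖T₁ (k+1) (a₁ - a₂)‖ ≤ ‖T₁ (k+1)‖ * ‖a₁ - a₂‖ := (T₁ (k+1)).le_opNorm _
        _ ≤ M * (M ^ (k - 1) * ‖x‖ * ∑ j ∈ Finset.Icc 1 k, ‖T₁ j - T₂ j‖) := by
            apply mul_le_mul (hT₁ _ hmem) (ih hk) (norm_nonneg _) hM
        _ ≤ M ^ k * ‖x‖ * ∑ j ∈ Finset.Icc 1 k, ‖T₁ j - T₂ j‖ := by
            rcases Nat.eq_zero_or_pos k with hk0 | hk0
            · subst hk0; simp
            · have : M * M ^ (k - 1) = M ^ k := by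
                rw [← pow_succ']
                congr 1
                omega
              apply le_of_eq; rw [← this]; ring
    have h4 : ‖(T₁ (k+1) - T₂ (k+1)) a₂‖ ≤ ‖T₁ (k+1) - T₂ (k+1)‖ * (M ^ k * ‖x‖) := by
      calc ‖(T₁ (k+1) - T₂ (k+1)) a₂‖ ≤ ‖T₁ (k+1) - T₂ (k+1)‖ * ‖a₂‖ :=
            (T₁ (k+1) - T₂ (k+1)).le_opNorm _
        _ ≤ ‖T₁ (k+1) - T₂ (k+1)‖ * (M ^ k * ‖x‖) := by
            apply mul_le_mul_of_nonneg_left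
              (layeredNet_norm_le n M hM T₂ g hT₂ hgNorm x k hk) (norm_nonneg _)
    have hsum : ∑ j ∈ Finset.Icc 1 (k+1), ‖T₁ j - T₂ j‖
        = (∑ j ∈ Finset.Icc 1 k, ‖T₁ j - T₂ j‖) + ‖T₁ (k+1) - T₂ (k+1)‖ := by
      rw [← Finset.sum_Icc_succ_top (Nat.succ_le_succ (Nat.zero_le _))]
    calc ‖layeredNet T₁ g x (k+1) - layeredNet T₂ g x (k+1)‖
        ≤ ‖T₁ (k+1) (a₁ - a₂)‖ + ‖(T₁ (k+1) - T₂ (k+1)) a₂‖ := h1.trans h2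
      _ ≤ M ^ k * ‖x‖ * (∑ j ∈ Finset.Icc 1 k, ‖T₁ j - T₂ j‖)
            + ‖T₁ (k+1) - T₂ (k+1)‖ * (M ^ k * ‖x‖) := add_le_add h3 h4
      _ = M ^ (k + 1 - 1) * ‖x‖ * ∑ j ∈ Finset.Icc 1 (k+1), ‖T₁ j - T₂ j‖ := by
          rw [hsum]; simp; ring

/-- The composition of two `n`-layer networks behaves like a `2n`-layer network:
`‖H¹(F¹(x)) − H²(F²(x))‖ ≤ M^(2n−1) * ‖x‖ * (∑ᵢ ‖Tᵢ¹ − Tᵢ²‖ + ∑ᵢ ‖Sᵢ¹ − Sᵢ²‖)`. -/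
theorem layeredNet_comp_dist_le {E : Type*} [NormedAddCommGroup E] [NormedSpace ℝ E]
    (n : ℕ) (hn : 1 ≤ n) (M : ℝ) (hM : 0 ≤ M)
    (T₁ T₂ S₁ S₂ : ℕ → E →L[ℝ] E) (g h : ℕ → E → E)
    (hT₁ : ∀ i ∈ Finset.Icc 1 n, ‖T₁ i‖ ≤ M)
    (hT₂ : ∀ i ∈ Finset.Icc 1 n, ‖T₂ i‖ ≤ M)
    (hS₁ : ∀ i ∈ Finset.Icc 1 n, ‖S₁ i‖ ≤ M)
    (hS₂ : ∀ i ∈ Finset.Icc 1 n, ‖S₂ i‖ ≤ M)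
    (hgLip : ∀ i ∈ Finset.Icc 1 n, ∀ u v : E, ‖g i u - g i v‖ ≤ ‖u - v‖)
    (hgNorm : ∀ i ∈ Finset.Icc 1 n, ∀ u : E, ‖g i u‖ ≤ ‖u‖)
    (hhLip : ∀ i ∈ Finset.Icc 1 n, ∀ u v : E, ‖h i u - h i v‖ ≤ ‖u - v‖)
    (hhNorm : ∀ i ∈ Finset.Icc 1 n, ∀ u : E, ‖h i u‖ ≤ ‖u‖)
    (x : E) :
    ‖layeredNet S₁ h (layeredNet T₁ g x n) n - layeredNet S₂ h (layeredNet T₂ g x n) n‖ ≤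
      M ^ (2 * n - 1) * ‖x‖ *
        ((∑ i ∈ Finset.Icc 1 n, ‖T₁ i - T₂ i‖) + ∑ i ∈ Finset.Icc 1 n, ‖S₁ i - S₂ i‖) := by
  set y₁ := layeredNet T₁ g x n
  set y₂ := layeredNet T₂ g x n
  have key : ‖layeredNet S₁ h y₁ n - layeredNet S₂ h y₂ n‖
      ≤ ‖layeredNet S₁ h y₁ n - layeredNet S₁ h y₂ n‖
        + ‖layeredNet S₁ h y₂ n - layeredNet S₂ h y₂ n‖ := norm_sub_le_norm_sub_add_norm_sub _ _ _
  have t1 : ‖layeredNet S₁ h y₁ n - layeredNet S₁ h y₂ n‖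
      ≤ M ^ n * (M ^ (n - 1) * ‖x‖ * ∑ i ∈ Finset.Icc 1 n, ‖T₁ i - T₂ i‖) := by
    calc ‖layeredNet S₁ h y₁ n - layeredNet S₁ h y₂ n‖ ≤ M ^ n * ‖y₁ - y₂‖ :=
          layeredNet_lip n M hM S₁ h hS₁ hhLip y₁ y₂ n le_rfl
      _ ≤ M ^ n * (M ^ (n - 1) * ‖x‖ * ∑ i ∈ Finset.Icc 1 n, ‖T₁ i - T₂ i‖) := by
          apply mul_le_mul_of_nonneg_left
            (layeredNet_perturb n M hM T₁ T₂ g hT₁ hT₂ hgLip hgNorm x n le_rfl)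
            (pow_nonneg hM n)
  have t2 : ‖layeredNet S₁ h y₂ n - layeredNet S₂ h y₂ n‖
      ≤ M ^ (n - 1) * (M ^ n * ‖x‖) * ∑ i ∈ Finset.Icc 1 n, ‖S₁ i - S₂ i‖ := by
    calc ‖layeredNet S₁ h y₂ n - layeredNet S₂ h y₂ n‖
        ≤ M ^ (n - 1) * ‖y₂‖ * ∑ i ∈ Finset.Icc 1 n, ‖S₁ i - S₂ i‖ :=
          layeredNet_perturb n M hM S₁ S₂ h hS₁ hS₂ hhLip hhNorm y₂ n le_rfl
      _ ≤ M ^ (n - 1) * (M ^ n * ‖x‖) * ∑ i ∈ Finset.Icc 1 n, ‖S₁ i - S₂ i‖ := by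
          apply mul_le_mul_of_nonneg_right _ (Finset.sum_nonneg fun j _ => norm_nonneg _)
          exact mul_le_mul_of_nonneg_left
            (layeredNet_norm_le n M hM T₂ g hT₂ hgNorm x n le_rfl)
            (pow_nonneg hM _)
  have hpow : M ^ n * M ^ (n - 1) = M ^ (2 * n - 1) := by
    rw [← pow_add]; congr 1; omega
  calc ‖layeredNet S₁ h y₁ n - layeredNet S₂ h y₂ n‖
      ≤ M ^ n * (M ^ (n - 1) * ‖x‖ * ∑ i ∈ Finset.Icc 1 n, ‖T₁ i - T₂ i‖)
        + M ^ (n - 1) * (M ^ n * ‖x‖) * ∑ i ∈ Finset.Icc 1 n, ‖S₁ i - S₂ i‖ :=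
        key.trans (add_le_add t1 t2)
    _ = M ^ (2 * n - 1) * ‖x‖ *
        ((∑ i ∈ Finset.Icc 1 n, ‖T₁ i - T₂ i‖) + ∑ i ∈ Finset.Icc 1 n, ‖S₁ i - S₂ i‖) := by
        rw [← hpow]; ring
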